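/- arXiv:2201.03042 — 5 statements merged into one kernel-verified Lean document; each statement's English description precedes it below -/
import Mathlib

section
/- Let V be a real M×N matrix (M ≥ N ≥ 1) of full column rank N, let G(w) := Vᵀ·diag(w)·V for w ∈ ℝ^M, and let E(w) := −(1/N)·log(det G(w)) + Σᵢ wᵢ on the set where det G(w) > 0. Then a vector w* with nonnegative entries and Σᵢ w*ᵢ = 1 maximizes det G(w) over the simplex {w ∈ ℝ^M : wᵢ ≥ 0 for all i, Σᵢ wᵢ = 1} if and only if w* minimizes E over the nonnegative orthant {w ∈ ℝ^M : wᵢ ≥ 0 for all i}. -/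
/-!
The determinant `D w = det (Vᵀ diag(w) V)` is homogeneous of degree `N` in `w`, so a maximizer
`w₀` on the simplex controls `D` on the whole orthant: `D w ≤ (∑ wᵢ)^N D w₀`. Taking logarithms,
`E w ≥ -log (∑ wᵢ) + ∑ wᵢ - (1/N) log D w₀ ≥ 1 - (1/N) log D w₀ = E w₀` by `log x ≤ x - 1`.
Conversely, on the simplex `E` is a decreasing function of `D`.
-/

open Matrix Real

namespace Matrix

lemma det_mul_diagonal_smul_mul {R m n : Type*} [CommRing R] [Fintype m] [Fintype n]
    [DecidableEq m] [DecidableEq n] (A : Matrix n m R) (B : Matrix m n R) (c : R) (w : m → R) :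
    (A * diagonal (c • w) * B).det = c ^ Fintype.card n * (A * diagonal w * B).det := by
  rw [diagonal_smul, Matrix.mul_smul, Matrix.smul_mul, det_smul]

lemma mulVec_injective_of_rank_eq_card {K m n : Type*} [Field K] [Fintype n]
    {V : Matrix m n K} (hV : V.rank = Fintype.card n) : Function.Injective V.mulVec :=
  mulVec_injective_iff.mpr <| linearIndependent_iff_card_eq_finrank_span.mpr <|
    hV.symm.trans (rank_eq_finrank_span_cols V)

lemma det_transpose_mul_self_pos_of_rank_eq_card {m n : Type*} [Fintype m] [Fintype n]
    [DecidableEq n] {V : Matrix m n ℝ} (hV : V.rank = Fintype.card n) : 0 < (Vᵀ * V).det := by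
  rw [← conjTranspose_eq_transpose_of_trivial]
  exact (PosDef.conjTranspose_mul_self V (mulVec_injective_of_rank_eq_card hV)).det_pos

end Matrix

section Homogeneous

variable {ι : Type*} [Fintype ι] {D : (ι → ℝ) → ℝ} {n : ℕ}

lemma sum_inv_smul_mem_stdSimplex {w : ι → ℝ} (hw : ∀ i, 0 ≤ w i) (hs : 0 < ∑ i, w i) :
    (∑ i, w i)⁻¹ • w ∈ stdSimplex ℝ ι := by
  refine ⟨fun i => mul_nonneg (inv_nonneg.mpr hs.le) (hw i), ?_⟩
  simp only [Pi.smul_apply, smul_eq_mul, ← Finset.mul_sum, inv_mul_cancel₀ hs.ne']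

lemma IsMaxOn.le_sum_pow_mul_of_homogeneous (hD : ∀ (c : ℝ) w, D (c • w) = c ^ n * D w)
    (hn : n ≠ 0) {w₀ : ι → ℝ} (hmax : IsMaxOn D (stdSimplex ℝ ι) w₀) {w : ι → ℝ}
    (hw : ∀ i, 0 ≤ w i) : D w ≤ (∑ i, w i) ^ n * D w₀ := by
  rcases (Finset.sum_nonneg fun i _ => hw i).eq_or_lt with hs | hs
  · have hw0 : w = 0 := funext fun i =>
      (Finset.sum_eq_zero_iff_of_nonneg fun i _ => hw i).mp hs.symm i (Finset.mem_univ i)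
    have hD0 : D 0 = 0 := by simpa [zero_pow hn] using hD 0 0
    rw [← hs, hw0, hD0, zero_pow hn, zero_mul]
  · calc D w = (∑ i, w i) ^ n * D ((∑ i, w i)⁻¹ • w) := by
          rw [← hD, smul_smul, mul_inv_cancel₀ hs.ne', one_smul]
      _ ≤ (∑ i, w i) ^ n * D w₀ :=
          mul_le_mul_of_nonneg_left (hmax (sum_inv_smul_mem_stdSimplex hw hs)) (by positivity)

lemma IsMaxOn.energy_le_of_homogeneous (hD : ∀ (c : ℝ) w, D (c • w) = c ^ n * D w)
    (hn : n ≠ 0) {w₀ : ι → ℝ} (hmax : IsMaxOn D (stdSimplex ℝ ι) w₀) (hw₀ : ∑ i, w₀ i = 1)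
    (hpos : 0 < D w₀) {w : ι → ℝ} (hw : ∀ i, 0 ≤ w i) (hDw : 0 < D w) :
    -(1 / (n : ℝ)) * log (D w₀) + ∑ i, w₀ i ≤ -(1 / (n : ℝ)) * log (D w) + ∑ i, w i := by
  set s := ∑ i, w i
  have hle : D w ≤ s ^ n * D w₀ := hmax.le_sum_pow_mul_of_homogeneous hD hn hw
  have hs : 0 < s := by
    by_contra! hs
    have hs0 : s = 0 := le_antisymm hs (Finset.sum_nonneg fun i _ => hw i)
    rw [hs0, zero_pow hn, zero_mul] at hle
    exact hDw.not_ge hle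
  have hlog : log (D w) ≤ n * log s + log (D w₀) := by
    calc log (D w) ≤ log (s ^ n * D w₀) := log_le_log hDw hle
      _ = n * log s + log (D w₀) := by rw [log_mul (by positivity) hpos.ne', log_pow]
  have hn' : (0 : ℝ) < n := by exact_mod_cast Nat.pos_of_ne_zero hn
  have hscaled : 1 / (n : ℝ) * log (D w) ≤ log s + 1 / n * log (D w₀) := by
    calc 1 / (n : ℝ) * log (D w) ≤ 1 / n * (n * log s + log (D w₀)) := by gcongr
      _ = log s + 1 / n * log (D w₀) := by field_simp
  linarith [log_le_sub_one_of_pos hs]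

theorem isMaxOn_stdSimplex_iff_isMinOn_energy_of_homogeneous
    (hD : ∀ (c : ℝ) w, D (c • w) = c ^ n * D w) (hn : n ≠ 0)
    (hex : ∃ w : ι → ℝ, (∀ i, 0 ≤ w i) ∧ 0 < D w) {w₀ : ι → ℝ} (hw₀ : ∑ i, w₀ i = 1) :
    IsMaxOn D (stdSimplex ℝ ι) w₀ ↔
      0 < D w₀ ∧ IsMinOn (fun w => -(1 / (n : ℝ)) * log (D w) + ∑ i, w i)
        {w | (∀ i, 0 ≤ w i) ∧ 0 < D w} w₀ := by
  constructor
  · intro hmax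
    obtain ⟨w, hw, hDw⟩ := hex
    have hpos : 0 < D w₀ := pos_of_mul_pos_right
      (hDw.trans_le (hmax.le_sum_pow_mul_of_homogeneous hD hn hw))
      (pow_nonneg (Finset.sum_nonneg fun i _ => hw i) n)
    exact ⟨hpos, fun w ⟨hw, hDw⟩ => hmax.energy_le_of_homogeneous hD hn hw₀ hpos hw hDw⟩
  · rintro ⟨hpos, hmin⟩ w ⟨hw, hsum⟩
    rcases le_or_gt (D w) 0 with hDw | hDw
    · exact hDw.trans hpos.le
    have hE : -(1 / (n : ℝ)) * log (D w₀) + ∑ i, w₀ i ≤ -(1 / (n : ℝ)) * log (D w) + ∑ i, w i :=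
      hmin ⟨hw, hDw⟩
    rw [hw₀, hsum] at hE
    have hn' : (0 : ℝ) < 1 / n := one_div_pos.mpr (by exact_mod_cast Nat.pos_of_ne_zero hn)
    have hlog : log (D w) ≤ log (D w₀) := le_of_mul_le_mul_left (by linarith) hn'
    exact (log_le_log_iff hDw hpos).mp hlog

end Homogeneous

theorem stmt_0_general (M N : ℕ) (hN : 0 < N)
    (V : Matrix (Fin M) (Fin N) ℝ) (hV : V.rank = N)
    (G : (Fin M → ℝ) → Matrix (Fin N) (Fin N) ℝ)
    (hG : ∀ w, G w = Vᵀ * diagonal w * V)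
    (E : (Fin M → ℝ) → ℝ)
    (hE : ∀ w, E w = -(1 / (N : ℝ)) * Real.log (G w).det + ∑ i, w i)
    (w₀ : Fin M → ℝ) (hw₀mass : ∑ i, w₀ i = 1) :
    IsMaxOn (fun w => (G w).det) {w | (∀ i, 0 ≤ w i) ∧ ∑ i, w i = 1} w₀ ↔
      (0 < (G w₀).det ∧
        IsMinOn E {w | (∀ i, 0 ≤ w i) ∧ 0 < (G w).det} w₀) := by
  obtain rfl : E = fun w => -(1 / (N : ℝ)) * log (G w).det + ∑ i, w i := funext hE
  have hhom : ∀ (c : ℝ) w, (G (c • w)).det = c ^ N * (G w).det := fun c w => by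
    rw [hG, hG, det_mul_diagonal_smul_mul, Fintype.card_fin]
  have hone : 0 < (G 1).det := by
    simpa [hG] using det_transpose_mul_self_pos_of_rank_eq_card (V := V) (by simpa using hV)
  exact isMaxOn_stdSimplex_iff_isMinOn_energy_of_homogeneous hhom hN.ne'
    ⟨1, fun _ => zero_le_one, hone⟩ hw₀mass

theorem stmt_0 (M N : ℕ) (hN : 0 < N) (hMN : N ≤ M)
    (V : Matrix (Fin M) (Fin N) ℝ) (hV : V.rank = N)
    (G : (Fin M → ℝ) → Matrix (Fin N) (Fin N) ℝ)
    (hG : ∀ w, G w = Vᵀ * diagonal w * V)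
    (E : (Fin M → ℝ) → ℝ)
    (hE : ∀ w, E w = -(1 / (N : ℝ)) * Real.log (G w).det + ∑ i, w i)
    (w₀ : Fin M → ℝ) (hw₀pos : ∀ i, 0 ≤ w₀ i) (hw₀mass : ∑ i, w₀ i = 1) :
    IsMaxOn (fun w => (G w).det) {w | (∀ i, 0 ≤ w i) ∧ ∑ i, w i = 1} w₀ ↔
      (0 < (G w₀).det ∧
        IsMinOn E {w | (∀ i, 0 ≤ w i) ∧ 0 < (G w).det} w₀) :=
  stmt_0_general M N hN V hV G hG E hE w₀ hw₀mass
end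

section
/- Let V be a real M×N matrix (M ≥ N ≥ 1) of full column rank N, G(w) := Vᵀ·diag(w)·V, E(w) := −(1/N)·log(det G(w)) + Σᵢ wᵢ, and F(z) := E(z²) where (z²)ᵢ := zᵢ². Then z* ∈ ℝ^M minimizes F over ℝ^M if and only if the vector w* := (z*)² (with w*ᵢ = (z*ᵢ)²) maximizes det G(w) over the simplex {w ∈ ℝ^M : wᵢ ≥ 0 for all i, Σᵢ wᵢ = 1}; in particular any minimizer z* of F satisfies Σᵢ (z*ᵢ)² = 1. -/
/-!
Since `det G` is homogeneous of degree `N` in the weights, normalising a weight vector `w` of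
total mass `s` with `det G(w) > 0` lowers the energy by exactly `s - 1 - log s`, which is
nonnegative and vanishes only at `s = 1`. So a minimiser of `E` has mass one, and on the simplex
`E = 1 - (1/N) log det G` is a decreasing function of `det G`. Full column rank makes the
normalised all-ones weight a point of the simplex with `det G > 0`, so a maximiser of `det G`
is feasible for `E`. Finally `z ↦ z²` maps onto the nonnegative orthant, so minimising `F` is
the same as minimising `E` over nonnegative weights with `det G > 0`.
-/

open Matrix

lemma Matrix.mulVec_injective_of_rank_eq_card_s1 {K m n : Type*} [Field K] [Fintype m] [Fintype n]
    {A : Matrix m n K} (hA : A.rank = Fintype.card n) : Function.Injective A.mulVec := by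
  have h := LinearMap.finrank_range_add_finrank_ker A.mulVecLin
  rw [← Matrix.rank, hA, Module.finrank_fintype_fun_eq_card] at h
  have hker : LinearMap.ker A.mulVecLin = ⊥ := Submodule.finrank_eq_zero.mp (by omega)
  exact LinearMap.ker_eq_bot.mp hker

lemma Matrix.det_transpose_mul_self_pos {m n : Type*} [Fintype m] [Fintype n] [DecidableEq n]
    {V : Matrix m n ℝ} (hV : V.rank = Fintype.card n) : 0 < (Vᵀ * V).det := by
  rw [← conjTranspose_eq_transpose_of_trivial]
  exact (PosDef.conjTranspose_mul_self V (mulVec_injective_of_rank_eq_card_s1 hV)).det_pos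

lemma isMinOn_comp_preimage_iff {α β γ : Type*} [Preorder γ] {f : β → γ} {g : α → β}
    {s : Set β} {a : α} (hg : s ⊆ Set.range g) :
    IsMinOn (f ∘ g) (g ⁻¹' s) a ↔ IsMinOn f s (g a) := by
  refine ⟨fun h b hb => ?_, fun h x hx => h hx⟩
  obtain ⟨x, rfl⟩ := hg hb
  exact h hb

namespace DOptimalDesign

variable {m n : Type*} [Fintype m] [DecidableEq m] (V : Matrix m n ℝ)

def weightedGram (w : m → ℝ) : Matrix n n ℝ := Vᵀ * diagonal w * V

variable {V} in
lemma weightedGram_one : weightedGram V 1 = Vᵀ * V := by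
  rw [weightedGram, Pi.one_def, diagonal_one, Matrix.mul_one]

variable [Fintype n] [DecidableEq n]

noncomputable def designEnergy (w : m → ℝ) : ℝ :=
  -(1 / (Fintype.card n : ℝ)) * Real.log (weightedGram V w).det + ∑ i, w i

def feasibleWeights : Set (m → ℝ) := {w | 0 ≤ w ∧ 0 < (weightedGram V w).det}

variable {V}

lemma det_weightedGram_smul (c : ℝ) (w : m → ℝ) :
    (weightedGram V (c • w)).det = c ^ Fintype.card n * (weightedGram V w).det := by
  rw [weightedGram, weightedGram, diagonal_smul, Matrix.mul_smul, Matrix.smul_mul, det_smul]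

lemma sum_pos_of_mem_feasibleWeights [Nonempty n] {w : m → ℝ} (hw : w ∈ feasibleWeights V) :
    0 < ∑ i, w i := by
  refine (Finset.sum_nonneg fun i _ => hw.1 i).lt_of_ne' fun hsum => ?_
  have hw0 : w = 0 := funext fun i =>
    (Finset.sum_eq_zero_iff_of_nonneg fun i _ => hw.1 i).mp hsum i (Finset.mem_univ i)
  have := hw.2
  simp [hw0, weightedGram] at this

lemma smul_mem_feasibleWeights {w : m → ℝ} (hw : w ∈ feasibleWeights V) {c : ℝ} (hc : 0 < c) :
    c • w ∈ feasibleWeights V :=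
  ⟨smul_nonneg hc.le hw.1, by rw [det_weightedGram_smul]; exact mul_pos (pow_pos hc _) hw.2⟩

lemma inv_sum_smul_mem_stdSimplex [Nonempty n] {w : m → ℝ} (hw : w ∈ feasibleWeights V) :
    (∑ i, w i)⁻¹ • w ∈ stdSimplex ℝ m := by
  have hs := sum_pos_of_mem_feasibleWeights hw
  refine ⟨fun i => smul_nonneg (inv_nonneg.mpr hs.le) (hw.1 i), ?_⟩
  simp only [Pi.smul_apply, smul_eq_mul, ← Finset.mul_sum, inv_mul_cancel₀ hs.ne']

lemma designEnergy_eq_inv_sum_smul_add [Nonempty n] {w : m → ℝ} (hw : w ∈ feasibleWeights V) :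
    designEnergy V w = designEnergy V ((∑ i, w i)⁻¹ • w)
      + (∑ i, w i - 1 - Real.log (∑ i, w i)) := by
  have hs := sum_pos_of_mem_feasibleWeights hw
  have hN : (Fintype.card n : ℝ) ≠ 0 := Nat.cast_ne_zero.mpr Fintype.card_ne_zero
  have hlog : Real.log (weightedGram V ((∑ i, w i)⁻¹ • w)).det
      = -(Fintype.card n * Real.log (∑ i, w i)) + Real.log (weightedGram V w).det := by
    rw [det_weightedGram_smul, Real.log_mul (by positivity) hw.2.ne', Real.log_pow, Real.log_inv]
    ring
  have hsum : ∑ i, ((∑ i, w i)⁻¹ • w) i = 1 := (inv_sum_smul_mem_stdSimplex hw).2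
  rw [designEnergy, designEnergy, hlog, hsum]
  field_simp
  ring

lemma designEnergy_of_mem_stdSimplex {w : m → ℝ} (hw : w ∈ stdSimplex ℝ m) :
    designEnergy V w = 1 - 1 / (Fintype.card n : ℝ) * Real.log (weightedGram V w).det := by
  rw [designEnergy, hw.2]
  ring

lemma designEnergy_le_designEnergy_iff [Nonempty n] {w w' : m → ℝ} (hw : w ∈ stdSimplex ℝ m)
    (hw' : w' ∈ stdSimplex ℝ m) (hdet : 0 < (weightedGram V w).det)
    (hdet' : 0 < (weightedGram V w').det) :
    designEnergy V w ≤ designEnergy V w' ↔ (weightedGram V w').det ≤ (weightedGram V w).det := by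
  have hN : (0 : ℝ) < 1 / Fintype.card n := by simp [Fintype.card_pos]
  rw [designEnergy_of_mem_stdSimplex hw, designEnergy_of_mem_stdSimplex hw', sub_le_sub_iff_left,
    mul_le_mul_iff_of_pos_left hN, Real.log_le_log_iff hdet' hdet]

lemma exists_mem_stdSimplex_det_weightedGram_pos [Nonempty n] (hV : V.rank = Fintype.card n) :
    ∃ u ∈ stdSimplex ℝ m, 0 < (weightedGram V u).det := by
  have h1 : (1 : m → ℝ) ∈ feasibleWeights V :=
    ⟨zero_le_one, by rw [weightedGram_one]; exact det_transpose_mul_self_pos hV⟩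
  exact ⟨_, inv_sum_smul_mem_stdSimplex h1, (smul_mem_feasibleWeights h1
    (inv_pos.mpr (sum_pos_of_mem_feasibleWeights h1))).2⟩

lemma mem_stdSimplex_of_isMinOn_designEnergy [Nonempty n] {w₀ : m → ℝ}
    (hw₀ : w₀ ∈ feasibleWeights V) (hmin : IsMinOn (designEnergy V) (feasibleWeights V) w₀) :
    w₀ ∈ stdSimplex ℝ m := by
  have hs := sum_pos_of_mem_feasibleWeights hw₀
  refine ⟨hw₀.1, by_contra fun hne => ?_⟩
  have hle : designEnergy V w₀ ≤ designEnergy V ((∑ i, w₀ i)⁻¹ • w₀) :=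
    hmin (smul_mem_feasibleWeights hw₀ (inv_pos.mpr hs))
  rw [designEnergy_eq_inv_sum_smul_add hw₀] at hle
  linarith [Real.log_lt_sub_one_of_pos hs hne]

lemma isMaxOn_det_of_isMinOn_designEnergy [Nonempty n] {w₀ : m → ℝ}
    (hw₀ : w₀ ∈ feasibleWeights V) (hmin : IsMinOn (designEnergy V) (feasibleWeights V) w₀) :
    IsMaxOn (fun w => (weightedGram V w).det) (stdSimplex ℝ m) w₀ := by
  have hw₀Δ := mem_stdSimplex_of_isMinOn_designEnergy hw₀ hmin
  intro w hw
  rcases le_or_gt (weightedGram V w).det 0 with hdet | hdet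
  · exact hdet.trans hw₀.2.le
  · exact (designEnergy_le_designEnergy_iff hw₀Δ hw hw₀.2 hdet).mp (hmin ⟨hw.1, hdet⟩)

lemma isMinOn_designEnergy_of_isMaxOn_det [Nonempty n] {w₀ : m → ℝ}
    (hw₀ : w₀ ∈ stdSimplex ℝ m) (hdet₀ : 0 < (weightedGram V w₀).det)
    (hmax : IsMaxOn (fun w => (weightedGram V w).det) (stdSimplex ℝ m) w₀) :
    IsMinOn (designEnergy V) (feasibleWeights V) w₀ := by
  intro w hw
  have hs := sum_pos_of_mem_feasibleWeights hw
  have hw' := smul_mem_feasibleWeights hw (inv_pos.mpr hs)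
  have hle := (designEnergy_le_designEnergy_iff hw₀ (inv_sum_smul_mem_stdSimplex hw) hdet₀
    hw'.2).mpr (hmax (inv_sum_smul_mem_stdSimplex hw))
  change designEnergy V w₀ ≤ designEnergy V w
  rw [designEnergy_eq_inv_sum_smul_add hw]
  linarith [Real.log_le_sub_one_of_pos hs]

theorem isMinOn_designEnergy_iff_isMaxOn_det [Nonempty n] (hV : V.rank = Fintype.card n)
    {w₀ : m → ℝ} :
    w₀ ∈ feasibleWeights V ∧ IsMinOn (designEnergy V) (feasibleWeights V) w₀ ↔
      w₀ ∈ stdSimplex ℝ m ∧ IsMaxOn (fun w => (weightedGram V w).det) (stdSimplex ℝ m) w₀ := by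
  refine ⟨fun ⟨hw₀, hmin⟩ => ⟨mem_stdSimplex_of_isMinOn_designEnergy hw₀ hmin,
    isMaxOn_det_of_isMinOn_designEnergy hw₀ hmin⟩, fun ⟨hw₀, hmax⟩ => ?_⟩
  obtain ⟨u, hu, hdetu⟩ := exists_mem_stdSimplex_det_weightedGram_pos hV
  have hdet₀ := hdetu.trans_le (hmax hu)
  exact ⟨⟨hw₀.1, hdet₀⟩, isMinOn_designEnergy_of_isMaxOn_det hw₀ hdet₀ hmax⟩

lemma feasibleWeights_subset_range_sq :
    feasibleWeights V ⊆ Set.range fun (z : m → ℝ) i => z i ^ 2 :=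
  fun w hw => ⟨fun i => Real.sqrt (w i), funext fun i => Real.sq_sqrt (hw.1 i)⟩

end DOptimalDesign

open DOptimalDesign in
theorem stmt_1_general (M N : ℕ) (hN : 0 < N)
    (V : Matrix (Fin M) (Fin N) ℝ) (hV : V.rank = N)
    (G : (Fin M → ℝ) → Matrix (Fin N) (Fin N) ℝ)
    (hG : ∀ w, G w = Vᵀ * diagonal w * V)
    (E : (Fin M → ℝ) → ℝ)
    (hE : ∀ w, E w = -(1 / (N : ℝ)) * Real.log (G w).det + ∑ i, w i)
    (F : (Fin M → ℝ) → ℝ) (hF : ∀ z, F z = E (fun i => (z i) ^ 2))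
    (z₀ : Fin M → ℝ) :
    ((0 < (G (fun i => (z₀ i) ^ 2)).det ∧
        IsMinOn F {z | 0 < (G (fun i => (z i) ^ 2)).det} z₀) ↔
      ((fun i => (z₀ i) ^ 2) ∈ {w : Fin M → ℝ | (∀ i, 0 ≤ w i) ∧ ∑ i, w i = 1} ∧
        IsMaxOn (fun w => (G w).det) {w | (∀ i, 0 ≤ w i) ∧ ∑ i, w i = 1}
          (fun i => (z₀ i) ^ 2)))
    ∧ ((0 < (G (fun i => (z₀ i) ^ 2)).det ∧
        IsMinOn F {z | 0 < (G (fun i => (z i) ^ 2)).det} z₀) →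
          ∑ i, (z₀ i) ^ 2 = 1) := by
  have : Nonempty (Fin N) := Fin.pos_iff_nonempty.mp hN
  obtain rfl : G = weightedGram V := funext hG
  obtain rfl : E = designEnergy V :=
    funext fun w => by rw [hE, designEnergy, Fintype.card_fin]
  set sq : (Fin M → ℝ) → Fin M → ℝ := fun z i => z i ^ 2
  obtain rfl : F = designEnergy V ∘ sq := funext hF
  have hdom : {z | 0 < (weightedGram V (sq z)).det} = sq ⁻¹' feasibleWeights V := by
    ext z
    simp [feasibleWeights, sq, Pi.le_def, sq_nonneg]
  have main : (0 < (weightedGram V (sq z₀)).det ∧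
      IsMinOn (designEnergy V ∘ sq) {z | 0 < (weightedGram V (sq z)).det} z₀) ↔
      sq z₀ ∈ stdSimplex ℝ (Fin M) ∧
        IsMaxOn (fun w => (weightedGram V w).det) (stdSimplex ℝ (Fin M)) (sq z₀) := by
    rw [hdom, isMinOn_comp_preimage_iff feasibleWeights_subset_range_sq,
      ← isMinOn_designEnergy_iff_isMaxOn_det (by rw [hV, Fintype.card_fin])]
    exact and_congr_left' ⟨fun h => ⟨fun i => sq_nonneg _, h⟩, And.right⟩
  exact ⟨main, fun h => (main.mp h).1.2⟩

theorem stmt_1 (M N : ℕ) (hN : 0 < N) (hMN : N ≤ M)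
    (V : Matrix (Fin M) (Fin N) ℝ) (hV : V.rank = N)
    (G : (Fin M → ℝ) → Matrix (Fin N) (Fin N) ℝ)
    (hG : ∀ w, G w = Vᵀ * diagonal w * V)
    (E : (Fin M → ℝ) → ℝ)
    (hE : ∀ w, E w = -(1 / (N : ℝ)) * Real.log (G w).det + ∑ i, w i)
    (F : (Fin M → ℝ) → ℝ) (hF : ∀ z, F z = E (fun i => (z i) ^ 2))
    (z₀ : Fin M → ℝ) :
    ((0 < (G (fun i => (z₀ i) ^ 2)).det ∧
        IsMinOn F {z | 0 < (G (fun i => (z i) ^ 2)).det} z₀) ↔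
      ((fun i => (z₀ i) ^ 2) ∈ {w : Fin M → ℝ | (∀ i, 0 ≤ w i) ∧ ∑ i, w i = 1} ∧
        IsMaxOn (fun w => (G w).det) {w | (∀ i, 0 ≤ w i) ∧ ∑ i, w i = 1}
          (fun i => (z₀ i) ^ 2)))
    ∧ ((0 < (G (fun i => (z₀ i) ^ 2)).det ∧
        IsMinOn F {z | 0 < (G (fun i => (z i) ^ 2)).det} z₀) →
          ∑ i, (z₀ i) ^ 2 = 1) :=
  stmt_1_general M N hN V hV G hG E hE F hF z₀
end

section
/- Let V be a real M×N matrix of full column rank N, G(w) := Vᵀ·diag(w)·V, E(w) := −(1/N)·log(det G(w)) + Σᵢ wᵢ, and F(z) := E(z²) with (z²)ᵢ = zᵢ². At any z ∈ ℝ^M with G(z²) positive definite, F is twice differentiable and, writing B_i := (V·G(z²)⁻¹·Vᵀ)ᵢᵢ and K_{ij} := (V·G(z²)⁻¹·Vᵀ)ᵢⱼ, one has ∂F/∂zᵢ (z) = 2·zᵢ·(1 − Bᵢ/N) and ∂²F/∂zᵢ∂zⱼ (z) = 4·zᵢ·zⱼ·K_{ij}²/N + 2·δᵢⱼ·(1 −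 Bᵢ/N), where δᵢⱼ is the Kronecker delta. -/
/-!
Moving a single weight `wᵢ` by `s` changes the information matrix `G(w) = Vᵀ diag(w) V` by the
rank-one term `s • vᵢ vᵢᵀ`, where `vᵢ` is the `i`-th row of `V`. Along such a line the matrix
determinant lemma gives `det (G + s vᵢ vᵢᵀ) = det G * (1 + s Kᵢᵢ)`, and the derivative of inversion,
`d(G⁻¹) = -G⁻¹ dG G⁻¹`, gives `dKⱼₖ = -ds Kⱼᵢ Kᵢₖ`, where `K = V G⁻¹ Vᵀ`. Moving `zᵢ` by `t` moves
`wᵢ = zᵢ²` by `(zᵢ + t)² - zᵢ²`, whose derivative at `0` is `2 zᵢ`; this yields both formulas as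
line derivatives. Differentiability holds because `det G` and the entries of `G⁻¹ = adj G / det G`
are polynomials and quotients of polynomials in `z`, so line derivatives are Fréchet partials.
-/

open Matrix

theorem hasDerivAt_add_sq_sub_sq (a : ℝ) :
    HasDerivAt (fun t => (a + t) ^ 2 - a ^ 2) (2 * a) 0 := by
  simpa using (((hasDerivAt_id' (0 : ℝ)).const_add a).pow 2).sub_const (a ^ 2)

theorem sq_add_smul_single {m : Type*} [DecidableEq m] (z : m → ℝ) (i : m) (t : ℝ) :
    (z + t • Pi.single i 1) ^ 2 = z ^ 2 + ((z i + t) ^ 2 - z i ^ 2) • Pi.single i 1 := by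
  ext k
  by_cases h : k = i
  · subst h; simp
  · simp [h]

section RankOne

variable {n : Type*} [Fintype n]

theorem dotProduct_mul_vecMulVec_mul_mulVec (A B : Matrix n n ℝ) (x u v y : n → ℝ) :
    x ⬝ᵥ (A * vecMulVec u v * B) *ᵥ y = (x ⬝ᵥ A *ᵥ u) * (v ⬝ᵥ B *ᵥ y) := by
  rw [← mulVec_mulVec, ← mulVec_mulVec, vecMulVec_mulVec, op_smul_eq_smul, mulVec_smul,
    dotProduct_smul, smul_eq_mul, mul_comm]

variable [DecidableEq n]

theorem det_add_smul_vecMulVec {A : Matrix n n ℝ} (hA : IsUnit A.det) (c : ℝ) (u v : n → ℝ) :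
    (A + c • vecMulVec u v).det = A.det * (1 + c * (v ⬝ᵥ A⁻¹ *ᵥ u)) := by
  rw [← vecMulVec_smul, vecMulVec_eq (Fin 1), det_add_replicateCol_mul_replicateRow hA,
    Matrix.mul_assoc, ← replicateCol_mulVec]
  simp

theorem hasDerivAt_log_det_add_smul_vecMulVec {A : Matrix n n ℝ} (hA : IsUnit A.det)
    (u v : n → ℝ) {c : ℝ → ℝ} {c' : ℝ} (hc : HasDerivAt c c' 0) (hc0 : c 0 = 0) :
    HasDerivAt (fun t => Real.log (A + c t • vecMulVec u v).det) (c' * (v ⬝ᵥ A⁻¹ *ᵥ u)) 0 := by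
  simp only [det_add_smul_vecMulVec hA]
  refine ((((hc.mul_const (v ⬝ᵥ A⁻¹ *ᵥ u)).const_add 1).const_mul A.det).log
    (by simpa [hc0] using hA.ne_zero)).congr_deriv ?_
  simp [hc0, hA.ne_zero]

/- A normed-algebra structure is needed only to differentiate `Ring.inverse`; the statement is
norm-free. -/
attribute [local instance] Matrix.linftyOpNormedRing Matrix.linftyOpNormedAlgebra in
theorem hasDerivAt_dotProduct_inv_add_smul_mulVec {A : Matrix n n ℝ} (hA : IsUnit A.det)
    (W : Matrix n n ℝ) (x y : n → ℝ) {c : ℝ → ℝ} {c' : ℝ} (hc : HasDerivAt c c' 0)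
    (hc0 : c 0 = 0) :
    HasDerivAt (fun t => x ⬝ᵥ (A + c t • W)⁻¹ *ᵥ y) (-c' * (x ⬝ᵥ (A⁻¹ * W * A⁻¹) *ᵥ y)) 0 := by
  let L : Matrix n n ℝ →ₗ[ℝ] ℝ :=
    { toFun := fun X => x ⬝ᵥ X *ᵥ y
      map_add' := fun X Y => by simp [add_mulVec, dotProduct_add]
      map_smul' := fun r X => by simp [smul_mulVec, dotProduct_smul] }
  obtain ⟨U, rfl⟩ := (isUnit_iff_isUnit_det A).2 hA
  have hline : HasDerivAt (fun t => (U : Matrix n n ℝ) + c t • W) (c' • W) 0 :=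
    (hc.smul_const W).const_add _
  have hinv := (hasFDerivAt_ringInverse (𝕜 := ℝ) U).comp_hasDerivAt_of_eq 0 hline (by simp [hc0])
  have hfun : (fun t => x ⬝ᵥ ((U : Matrix n n ℝ) + c t • W)⁻¹ *ᵥ y) =
      L.toContinuousLinearMap ∘ Ring.inverse ∘ fun t => (U : Matrix n n ℝ) + c t • W := by
    funext t
    simp [L, nonsing_inv_eq_ringInverse]
  rw [hfun]
  refine (L.toContinuousLinearMap.hasFDerivAt.comp_hasDerivAt 0 hinv).congr_deriv ?_
  -- `simp` cannot see through `L.toContinuousLinearMap` here: its instance path on `Matrix`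
  -- differs from the one of the local normed structure.
  change x ⬝ᵥ (-(((U⁻¹ : (Matrix n n ℝ)ˣ) : Matrix n n ℝ) * (c' • W) *
    ((U⁻¹ : (Matrix n n ℝ)ˣ) : Matrix n n ℝ))) *ᵥ y = _
  simp [coe_units_inv, neg_mulVec, smul_mulVec]

end RankOne

section Differentiability

variable {𝕜 E : Type*} [NontriviallyNormedField 𝕜] [NormedAddCommGroup E] [NormedSpace 𝕜 E]
  {n : Type*} [Fintype n] {A : E → Matrix n n 𝕜} {x : E}

theorem differentiableAt_det_of_entries [DecidableEq n]
    (hA : ∀ i j, DifferentiableAt 𝕜 (fun y => A y i j) x) :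
    DifferentiableAt 𝕜 (fun y => (A y).det) x := by
  simp only [det_apply]
  fun_prop

theorem differentiableAt_inv_apply_of_entries [DecidableEq n]
    (hA : ∀ i j, DifferentiableAt 𝕜 (fun y => A y i j) x) (hx : (A x).det ≠ 0) (i j : n) :
    DifferentiableAt 𝕜 (fun y => (A y)⁻¹ i j) x := by
  simp only [inv_def, Ring.inverse_eq_inv', Matrix.smul_apply, smul_eq_mul, adjugate_apply]
  refine ((differentiableAt_det_of_entries hA).inv hx).mul
    (differentiableAt_det_of_entries fun k l => ?_)
  by_cases h : k = j
  · simp only [updateRow_apply, h, if_true]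
    exact differentiableAt_const _
  · simp only [updateRow_apply, h, if_false]
    exact hA k l

theorem differentiableAt_dotProduct_mulVec_of_entries (u v : n → 𝕜)
    (hA : ∀ i j, DifferentiableAt 𝕜 (fun y => A y i j) x) :
    DifferentiableAt 𝕜 (fun y => u ⬝ᵥ A y *ᵥ v) x := by
  simp only [dotProduct, mulVec]
  exact DifferentiableAt.fun_sum fun i _ => (differentiableAt_const _).mul
    (DifferentiableAt.fun_sum fun j _ => (hA i j).mul (differentiableAt_const _))

end Differentiability

section Design

variable {m n : Type*} [Fintype m] [DecidableEq m]

def informationMatrix (V : Matrix m n ℝ) (w : m → ℝ) : Matrix n n ℝ := Vᵀ * diagonal w * V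

variable (V : Matrix m n ℝ)

theorem informationMatrix_apply (w : m → ℝ) (a b : n) :
    informationMatrix V w a b = ∑ k, V k a * w k * V k b := by
  simp [informationMatrix, mul_apply, diagonal_apply]

theorem isSymm_informationMatrix (w : m → ℝ) : (informationMatrix V w).IsSymm := by
  simp [informationMatrix, IsSymm, transpose_mul, Matrix.mul_assoc]

theorem informationMatrix_add_smul_single (w : m → ℝ) (i : m) (s : ℝ) :
    informationMatrix V (w + s • Pi.single i 1) =
      informationMatrix V w + s • vecMulVec (V i) (V i) := by
  ext a b
  simp [informationMatrix_apply, vecMulVec_apply, Pi.single_apply, mul_add,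
    Finset.sum_add_distrib, mul_comm, mul_left_comm]

theorem differentiable_informationMatrix_sq_apply (a b : n) :
    Differentiable ℝ fun v : m → ℝ => informationMatrix V (v ^ 2) a b := by
  simp only [informationMatrix_apply, Pi.pow_apply]
  fun_prop

variable [Fintype n] [DecidableEq n]

noncomputable def hatMatrix (w : m → ℝ) : Matrix m m ℝ := V * (informationMatrix V w)⁻¹ * Vᵀ

noncomputable def designEnergy (w : m → ℝ) : ℝ :=
  -(1 / (Fintype.card n : ℝ)) * Real.log (informationMatrix V w).det + ∑ i, w i

theorem isSymm_hatMatrix (w : m → ℝ) : (hatMatrix V w).IsSymm := by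
  rw [IsSymm, hatMatrix, transpose_mul, transpose_mul, transpose_transpose,
    (isSymm_informationMatrix V w).inv.eq, Matrix.mul_assoc]

theorem hatMatrix_apply (w : m → ℝ) (i j : m) :
    hatMatrix V w i j = V i ⬝ᵥ (informationMatrix V w)⁻¹ *ᵥ V j := by
  simp only [hatMatrix, mul_apply, transpose_apply, dotProduct, mulVec, Finset.mul_sum,
    Finset.sum_mul, mul_assoc]
  exact Finset.sum_comm

end Design

section LineDerivatives

variable {m n : Type*} [Fintype m] [DecidableEq m] [Fintype n] [DecidableEq n]
  (V : Matrix m n ℝ) {c : ℝ → ℝ} {c' : ℝ}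

theorem hasDerivAt_designEnergy_add_smul_single {w : m → ℝ}
    (hw : IsUnit (informationMatrix V w).det) (i : m) (hc : HasDerivAt c c' 0) (hc0 : c 0 = 0) :
    HasDerivAt (fun t => designEnergy V (w + c t • Pi.single i 1))
      (c' * (1 - hatMatrix V w i i / Fintype.card n)) 0 := by
  have hsum : ∀ t, ∑ k, (w + c t • Pi.single i 1 : m → ℝ) k = ∑ k, w k + c t := fun t => by
    simp [Finset.sum_add_distrib, Pi.single_apply]
  simp only [designEnergy, informationMatrix_add_smul_single, hsum]
  refine (((hasDerivAt_log_det_add_smul_vecMulVec hw (V i) (V i) hc hc0).const_mul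
    (-(1 / (Fintype.card n : ℝ)))).add (hc.const_add (∑ k, w k))).congr_deriv ?_
  rw [hatMatrix_apply]
  ring

theorem hasDerivAt_hatMatrix_add_smul_single {w : m → ℝ}
    (hw : IsUnit (informationMatrix V w).det) (i j k : m) (hc : HasDerivAt c c' 0)
    (hc0 : c 0 = 0) :
    HasDerivAt (fun t => hatMatrix V (w + c t • Pi.single i 1) j k)
      (-c' * (hatMatrix V w j i * hatMatrix V w i k)) 0 := by
  simp only [hatMatrix_apply, informationMatrix_add_smul_single]
  refine (hasDerivAt_dotProduct_inv_add_smul_mulVec hw _ (V j) (V k) hc hc0).congr_deriv ?_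
  rw [dotProduct_mul_vecMulVec_mul_mulVec]

variable {z : m → ℝ} (hz : IsUnit (informationMatrix V (z ^ 2)).det)
include hz

theorem hasLineDerivAt_designEnergy_sq (i : m) :
    HasLineDerivAt ℝ (fun v => designEnergy V (v ^ 2))
      (2 * z i * (1 - hatMatrix V (z ^ 2) i i / Fintype.card n)) z (Pi.single i 1) := by
  simp only [HasLineDerivAt, sq_add_smul_single]
  exact hasDerivAt_designEnergy_add_smul_single V hz i (hasDerivAt_add_sq_sub_sq (z i)) (by simp)

theorem hasLineDerivAt_hatMatrix_sq (i j k : m) :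
    HasLineDerivAt ℝ (fun v => hatMatrix V (v ^ 2) j k)
      (-(2 * z i) * (hatMatrix V (z ^ 2) j i * hatMatrix V (z ^ 2) i k)) z (Pi.single i 1) := by
  simp only [HasLineDerivAt, sq_add_smul_single]
  exact hasDerivAt_hatMatrix_add_smul_single V hz i j k (hasDerivAt_add_sq_sub_sq (z i)) (by simp)

theorem hasLineDerivAt_partialDeriv_designEnergy_sq (i j : m) :
    HasLineDerivAt ℝ (fun v => 2 * v j * (1 - hatMatrix V (v ^ 2) j j / Fintype.card n))
      (4 * z i * z j * hatMatrix V (z ^ 2) i j ^ 2 / Fintype.card n +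
        2 * (if i = j then 1 else 0) * (1 - hatMatrix V (z ^ 2) i i / Fintype.card n))
      z (Pi.single i 1) := by
  have hcoord : HasDerivAt (fun t : ℝ => 2 * (z + t • Pi.single i 1 : m → ℝ) j)
      (2 * (Pi.single i 1 : m → ℝ) j) 0 := by
    simpa using (((hasDerivAt_id' (0 : ℝ)).mul_const ((Pi.single i 1 : m → ℝ) j)).const_add
      (z j)).const_mul (2 : ℝ)
  have hK := hasLineDerivAt_hatMatrix_sq V hz i j j
  unfold HasLineDerivAt at *
  refine (hcoord.mul ((hK.div_const _).const_sub 1)).congr_deriv ?_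
  rw [(isSymm_hatMatrix V _).apply i j]
  simp only [zero_smul, add_zero, Pi.single_apply, eq_comm (a := j)]
  split_ifs with h
  · subst h
    ring
  · ring

end LineDerivatives

section Smoothness

variable {m n : Type*} [Fintype m] [DecidableEq m] [Fintype n] [DecidableEq n]
  (V : Matrix m n ℝ)

theorem differentiable_det_informationMatrix_sq :
    Differentiable ℝ fun v : m → ℝ => (informationMatrix V (v ^ 2)).det := fun _ =>
  differentiableAt_det_of_entries fun a b => differentiable_informationMatrix_sq_apply V a b _

variable {z : m → ℝ} (hz : IsUnit (informationMatrix V (z ^ 2)).det)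
include hz

theorem differentiableAt_designEnergy_sq :
    DifferentiableAt ℝ (fun v => designEnergy V (v ^ 2)) z := by
  simp only [designEnergy, Pi.pow_apply]
  exact ((differentiable_det_informationMatrix_sq V z).log hz.ne_zero).const_mul _ |>.add
    (by fun_prop)

theorem differentiableAt_hatMatrix_sq (j k : m) :
    DifferentiableAt ℝ (fun v => hatMatrix V (v ^ 2) j k) z := by
  simp only [hatMatrix_apply]
  exact differentiableAt_dotProduct_mulVec_of_entries _ _ <|
    differentiableAt_inv_apply_of_entries
      (fun a b => differentiable_informationMatrix_sq_apply V a b z) hz.ne_zero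

theorem differentiableAt_partialDeriv_designEnergy_sq (j : m) :
    DifferentiableAt ℝ (fun v => 2 * v j * (1 - hatMatrix V (v ^ 2) j j / Fintype.card n)) z := by
  have := differentiableAt_hatMatrix_sq V hz j j
  fun_prop

theorem fderiv_designEnergy_sq_single (i : m) :
    fderiv ℝ (fun v => designEnergy V (v ^ 2)) z (Pi.single i 1) =
      2 * z i * (1 - hatMatrix V (z ^ 2) i i / Fintype.card n) := by
  rw [← (differentiableAt_designEnergy_sq V hz).lineDeriv_eq_fderiv,
    (hasLineDerivAt_designEnergy_sq V hz i).lineDeriv]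

end Smoothness

open Filter Topology in
theorem stmt_5_general (M N : ℕ)
    (V : Matrix (Fin M) (Fin N) ℝ)
    (G : (Fin M → ℝ) → Matrix (Fin N) (Fin N) ℝ)
    (hG : ∀ w, G w = Vᵀ * diagonal w * V)
    (E : (Fin M → ℝ) → ℝ)
    (hE : ∀ w, E w = -(1 / (N : ℝ)) * Real.log (G w).det + ∑ i, w i)
    (F : (Fin M → ℝ) → ℝ) (hF : ∀ z, F z = E (fun i => (z i) ^ 2))
    (z : Fin M → ℝ) (hz : (G (fun i => (z i) ^ 2)).PosDef) :
    DifferentiableAt ℝ F z ∧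
    (∀ j, DifferentiableAt ℝ (fun v => fderiv ℝ F v (Pi.single j 1)) z) ∧
    (∀ i, fderiv ℝ F z (Pi.single i 1) =
      2 * z i * (1 - (V * (G (fun i => (z i) ^ 2))⁻¹ * Vᵀ) i i / (N : ℝ))) ∧
    (∀ i j, fderiv ℝ (fun v => fderiv ℝ F v (Pi.single j 1)) z (Pi.single i 1) =
      4 * z i * z j * ((V * (G (fun i => (z i) ^ 2))⁻¹ * Vᵀ) i j) ^ 2 / (N : ℝ) +
        2 * (if i = j then (1 : ℝ) else 0) *
          (1 - (V * (G (fun i => (z i) ^ 2))⁻¹ * Vᵀ) i i / (N : ℝ))) := by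
  obtain rfl : G = informationMatrix V := funext hG
  obtain rfl : F = fun v => designEnergy V (v ^ 2) :=
    funext fun v => by rw [hF, hE, designEnergy, Fintype.card_fin]; rfl
  have hz' : IsUnit (informationMatrix V (z ^ 2)).det := hz.det_pos.ne'.isUnit
  have hnear : ∀ᶠ v in 𝓝 z, IsUnit (informationMatrix V (v ^ 2)).det :=
    ((differentiable_det_informationMatrix_sq V).continuous.continuousAt.eventually_ne
      hz'.ne_zero).mono fun v hv => hv.isUnit
  have hpartial : ∀ j, (fun v => fderiv ℝ (fun v => designEnergy V (v ^ 2)) v (Pi.single j 1))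
      =ᶠ[𝓝 z] fun v => 2 * v j * (1 - hatMatrix V (v ^ 2) j j / Fintype.card (Fin N)) :=
    fun j => hnear.mono fun v hv => fderiv_designEnergy_sq_single V hv j
  refine ⟨differentiableAt_designEnergy_sq V hz', fun j => (hpartial j).differentiableAt_iff.2
    (differentiableAt_partialDeriv_designEnergy_sq V hz' j), fun i => ?_, fun i j => ?_⟩
  -- `rfl` identifies `z ^ 2` with `fun i => z i ^ 2` and unfolds `hatMatrix`.
  · rw [fderiv_designEnergy_sq_single V hz' i, Fintype.card_fin]
    rfl
  · rw [(hpartial j).fderiv_eq,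
      ← (differentiableAt_partialDeriv_designEnergy_sq V hz' j).lineDeriv_eq_fderiv,
      (hasLineDerivAt_partialDeriv_designEnergy_sq V hz' i j).lineDeriv, Fintype.card_fin]
    rfl

theorem stmt_5 (M N : ℕ) (hN : 0 < N) (hMN : N ≤ M)
    (V : Matrix (Fin M) (Fin N) ℝ) (hV : V.rank = N)
    (G : (Fin M → ℝ) → Matrix (Fin N) (Fin N) ℝ)
    (hG : ∀ w, G w = Vᵀ * diagonal w * V)
    (E : (Fin M → ℝ) → ℝ)
    (hE : ∀ w, E w = -(1 / (N : ℝ)) * Real.log (G w).det + ∑ i, w i)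
    (F : (Fin M → ℝ) → ℝ) (hF : ∀ z, F z = E (fun i => (z i) ^ 2))
    (z : Fin M → ℝ) (hz : (G (fun i => (z i) ^ 2)).PosDef) :
    DifferentiableAt ℝ F z ∧
    (∀ j, DifferentiableAt ℝ (fun v => fderiv ℝ F v (Pi.single j 1)) z) ∧
    (∀ i, fderiv ℝ F z (Pi.single i 1) =
      2 * z i * (1 - (V * (G (fun i => (z i) ^ 2))⁻¹ * Vᵀ) i i / (N : ℝ))) ∧
    (∀ i j, fderiv ℝ (fun v => fderiv ℝ F v (Pi.single j 1)) z (Pi.single i 1) =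
      4 * z i * z j * ((V * (G (fun i => (z i) ^ 2))⁻¹ * Vᵀ) i j) ^ 2 / (N : ℝ) +
        2 * (if i = j then (1 : ℝ) else 0) *
          (1 - (V * (G (fun i => (z i) ^ 2))⁻¹ * Vᵀ) i i / (N : ℝ))) :=
  stmt_5_general M N V G hG E hE F hF z hz
end

section
/- Let V be a real M×N matrix of full column rank N, G(w) := Vᵀ·diag(w)·V, and E(w) := −(1/N)·log(det G(w)) + Σᵢ wᵢ. If w* and v* both minimize E over the nonnegative orthant {w ∈ ℝ^M : wᵢ ≥ 0 for all i}, then w* − v* ∈ K := {u ∈ ℝ^M : Vᵀ·diag(u)·V = 0}; in particular, all minimizers of E have the same information matrix: G(w*) = G(v*). -/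
/-!
The map `w ↦ G w` is linear and `A ↦ log det A` is strictly concave on positive definite
matrices, so if two minimizers had different information matrices, their midpoint would be
feasible with strictly smaller energy. Strict midpoint concavity of `log det` reduces, by a
congruence `A = Uᴴ U`, to the case `A = 1`, where it is AM–GM on the eigenvalues `μ` of `B`:
`μ ≤ ((1 + μ) / 2) ^ 2`, with equality only at `μ = 1`.
-/

open Matrix

namespace Matrix

variable {n : Type*} [Fintype n]

theorem IsHermitian.det_cfc [DecidableEq n] {A : Matrix n n ℝ} (hA : A.IsHermitian)
    (f : ℝ → ℝ) : (cfc f A).det = ∏ i, f (hA.eigenvalues i) := by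
  rw [hA.cfc_eq]
  simp [IsHermitian.cfc, -Unitary.conjStarAlgAut_apply, det_diagonal]

theorem IsHermitian.eq_one_of_eigenvalues_eq_one [DecidableEq n] {A : Matrix n n ℝ}
    (hA : A.IsHermitian) (h : ∀ i, hA.eigenvalues i = 1) : A = 1 := by
  have hspec : Set.EqOn id (fun _ => 1) (spectrum ℝ A) := by
    rw [hA.spectrum_real_eq_range_eigenvalues]
    rintro _ ⟨i, rfl⟩
    exact h i
  rw [← cfc_id ℝ A hA.isSelfAdjoint, cfc_congr hspec, cfc_const 1 A hA.isSelfAdjoint, map_one]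

theorem det_star_mul_mul [DecidableEq n] (U X : Matrix n n ℝ) :
    (star U * X * U).det = U.det ^ 2 * X.det := by
  rw [det_mul, det_mul, star_eq_conjTranspose, det_conjTranspose, star_trivial]
  ring

theorem PosDef.eq_one_of_sq_det_midpoint_le [DecidableEq n] {C : Matrix n n ℝ} (hC : C.PosDef)
    (h : ((2⁻¹ : ℝ) • (1 + C)).det ^ 2 ≤ C.det) : C = 1 := by
  set μ := hC.1.eigenvalues
  have hmid : cfc (fun x : ℝ => 2⁻¹ * (1 + x)) C = (2⁻¹ : ℝ) • (1 + C) := by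
    have := hC.1.isSelfAdjoint
    rw [cfc_const_mul .., cfc_add .., cfc_const_one .., cfc_id' ..]
  refine hC.1.eq_one_of_eigenvalues_eq_one fun i => ?_
  by_contra hi
  have hlt : C.det < ((2⁻¹ : ℝ) • (1 + C)).det ^ 2 := by
    rw [← hmid, hC.1.det_cfc, hC.1.det_eq_prod_eigenvalues, ← Finset.prod_pow]
    simp only [RCLike.ofReal_real_eq_id, id_eq]
    refine Finset.prod_lt_prod (fun j _ => hC.eigenvalues_pos j) (fun j _ => ?_)
      ⟨i, Finset.mem_univ i, ?_⟩
    · nlinarith [sq_nonneg (μ j - 1)]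
    · nlinarith [sq_pos_of_ne_zero (sub_ne_zero.mpr hi)]
  exact h.not_gt hlt

open scoped MatrixOrder in
theorem PosDef.eq_of_sq_det_midpoint_le [DecidableEq n] {A B : Matrix n n ℝ} (hA : A.PosDef)
    (hB : B.PosDef) (h : ((2⁻¹ : ℝ) • (A + B)).det ^ 2 ≤ A.det * B.det) : A = B := by
  obtain ⟨U, rfl⟩ := CStarAlgebra.nonneg_iff_eq_star_mul_self.mp hA.posSemidef.nonneg
  have hAdet : (star U * U).det = U.det ^ 2 := by simpa using det_star_mul_mul U 1
  have hUdet : U.det ≠ 0 := fun h0 => by simpa [hAdet, h0] using hA.det_pos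
  lift U to (Matrix n n ℝ)ˣ using (isUnit_iff_isUnit_det U).mpr hUdet.isUnit
  set C := star ((U⁻¹ : (Matrix n n ℝ)ˣ) : Matrix n n ℝ) * B * (U⁻¹ : (Matrix n n ℝ)ˣ)
  have hBC : B = star (U : Matrix n n ℝ) * C * U := by
    simp [C, ← mul_assoc, ← star_mul]
  have hC : C.PosDef := (IsUnit.posDef_star_left_conjugate_iff U.isUnit).mp (hBC ▸ hB)
  have hmid : (2⁻¹ : ℝ) • (star (U : Matrix n n ℝ) * U + B) =
      star (U : Matrix n n ℝ) * ((2⁻¹ : ℝ) • (1 + C)) * U := by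
    rw [hBC, Matrix.mul_smul, Matrix.smul_mul, Matrix.mul_add, Matrix.add_mul, Matrix.mul_one]
  rw [hmid, hAdet, hBC, det_star_mul_mul, det_star_mul_mul] at h
  have hC1 : C = 1 := hC.eq_one_of_sq_det_midpoint_le <| by
    have hU4 : 0 < (U : Matrix n n ℝ).det ^ 4 := by positivity
    nlinarith
  rw [hBC, hC1, mul_one]

theorem posSemidef_transpose_mul_diagonal_mul {m : Type*} [Fintype m] [DecidableEq m]
    (V : Matrix m n ℝ) {w : m → ℝ} (hw : 0 ≤ w) : (Vᵀ * diagonal w * V).PosSemidef := by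
  simpa using (PosSemidef.diagonal hw).conjTranspose_mul_mul_same V

end Matrix

theorem stmt_9_general (M N : ℕ) (hN : 0 < N)
    (V : Matrix (Fin M) (Fin N) ℝ)
    (G : (Fin M → ℝ) → Matrix (Fin N) (Fin N) ℝ)
    (hG : ∀ w, G w = Vᵀ * diagonal w * V)
    (E : (Fin M → ℝ) → ℝ)
    (hE : ∀ w, E w = -(1 / (N : ℝ)) * Real.log (G w).det + ∑ i, w i)
    (w₀ v₀ : Fin M → ℝ)
    (hw₀mem : w₀ ∈ {w : Fin M → ℝ | (∀ i, 0 ≤ w i) ∧ 0 < (G w).det})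
    (hw₀min : IsMinOn E {w : Fin M → ℝ | (∀ i, 0 ≤ w i) ∧ 0 < (G w).det} w₀)
    (hv₀mem : v₀ ∈ {w : Fin M → ℝ | (∀ i, 0 ≤ w i) ∧ 0 < (G w).det})
    (hv₀min : IsMinOn E {w : Fin M → ℝ | (∀ i, 0 ≤ w i) ∧ 0 < (G w).det} v₀) :
    Vᵀ * diagonal (w₀ - v₀) * V = 0 ∧ G w₀ = G v₀ := by
  set S := {w : Fin M → ℝ | (∀ i, 0 ≤ w i) ∧ 0 < (G w).det}
  have hPD : ∀ w ∈ S, (G w).PosDef := fun w ⟨hw, hdet⟩ =>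
    (hG w ▸ posSemidef_transpose_mul_diagonal_mul V hw).posDef_iff_det_ne_zero.mpr hdet.ne'
  set m := (2⁻¹ : ℝ) • (w₀ + v₀)
  have hGm : G m = (2⁻¹ : ℝ) • (G w₀ + G v₀) := by
    rw [hG, hG, hG, diagonal_smul, show diagonal (w₀ + v₀) = diagonal w₀ + diagonal v₀ from
      (diagonal_add w₀ v₀).symm, Matrix.mul_smul, Matrix.smul_mul, Matrix.mul_add, Matrix.add_mul]
  have hm : m ∈ S := by
    refine ⟨fun i => ?_, hGm ▸ ((hPD w₀ hw₀mem).add (hPD v₀ hv₀mem)).smul (by norm_num) |>.det_pos⟩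
    have := hw₀mem.1 i
    have := hv₀mem.1 i
    simp only [m, Pi.smul_apply, Pi.add_apply, smul_eq_mul]
    positivity
  have hlog : 2 * Real.log (G m).det ≤ Real.log (G w₀).det + Real.log (G v₀).det := by
    have h₁ := isMinOn_iff.mp hw₀min m hm
    have h₂ := isMinOn_iff.mp hv₀min m hm
    have hsum : ∑ i, m i = 2⁻¹ * ∑ i, w₀ i + 2⁻¹ * ∑ i, v₀ i := by
      simp only [m, Pi.smul_apply, Pi.add_apply, smul_eq_mul, ← Finset.mul_sum,
        Finset.sum_add_distrib, mul_add]
    rw [hE, hE, hsum] at h₁ h₂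
    have hN' : (0 : ℝ) < 1 / N := by positivity
    nlinarith
  have hsq : (G m).det ^ 2 ≤ (G w₀).det * (G v₀).det := by
    rwa [← Real.log_le_log_iff (pow_pos hm.2 2) (mul_pos hw₀mem.2 hv₀mem.2), Real.log_pow,
      Real.log_mul hw₀mem.2.ne' hv₀mem.2.ne', Nat.cast_ofNat]
  have hGG : G w₀ = G v₀ := (hPD w₀ hw₀mem).eq_of_sq_det_midpoint_le (hPD v₀ hv₀mem) (hGm ▸ hsq)
  refine ⟨?_, hGG⟩
  rw [show diagonal (w₀ - v₀) = diagonal w₀ - diagonal v₀ from (diagonal_sub w₀ v₀).symm,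
    Matrix.mul_sub, Matrix.sub_mul, ← hG, ← hG, hGG, sub_self]

theorem stmt_9 (M N : ℕ) (hN : 0 < N) (hMN : N ≤ M)
    (V : Matrix (Fin M) (Fin N) ℝ) (hV : V.rank = N)
    (G : (Fin M → ℝ) → Matrix (Fin N) (Fin N) ℝ)
    (hG : ∀ w, G w = Vᵀ * diagonal w * V)
    (E : (Fin M → ℝ) → ℝ)
    (hE : ∀ w, E w = -(1 / (N : ℝ)) * Real.log (G w).det + ∑ i, w i)
    (w₀ v₀ : Fin M → ℝ)
    (hw₀mem : w₀ ∈ {w : Fin M → ℝ | (∀ i, 0 ≤ w i) ∧ 0 < (G w).det})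
    (hw₀min : IsMinOn E {w : Fin M → ℝ | (∀ i, 0 ≤ w i) ∧ 0 < (G w).det} w₀)
    (hv₀mem : v₀ ∈ {w : Fin M → ℝ | (∀ i, 0 ≤ w i) ∧ 0 < (G w).det})
    (hv₀min : IsMinOn E {w : Fin M → ℝ | (∀ i, 0 ≤ w i) ∧ 0 < (G w).det} v₀) :
    Vᵀ * diagonal (w₀ - v₀) * V = 0 ∧ G w₀ = G v₀ :=
  stmt_9_general M N hN V G hG E hE w₀ v₀ hw₀mem hw₀min hv₀mem hv₀min
end

section
/- Let V be a real M×N matrix (M ≥ N ≥ 1) of full column rank N and G(w) := Vᵀ·diag(w)·V. If w* maximizes det G(w) over the simplex {w ∈ ℝ^M : wᵢ ≥ 0 for all i, Σᵢ wᵢ = 1}, then det G(w*) > 0 and the support of w* has cardinality at least N: card{i : w*ᵢ > 0} ≥ N. -/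
/-!
The uniform design `u = 1/M` has `G u = M⁻¹ • VᵀV`, which is positive definite because `V` has
full column rank; so the maximal determinant is positive and `G w*` is invertible, of rank `N`.
But `Vᵀ · diag w · V` factors through `diag w`, whose rank is the size of the support of `w`.
-/

open Matrix

namespace Matrix

variable {l m n K : Type*} [Fintype n]

theorem mulVec_injective_of_rank_eq_card_s19 [Field K] {A : Matrix m n K}
    (hA : A.rank = Fintype.card n) : Function.Injective A.mulVec := by
  have hker : Module.finrank K (LinearMap.ker A.mulVecLin) = 0 := by
    have := LinearMap.finrank_range_add_finrank_ker A.mulVecLin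
    rw [← Matrix.rank, hA, Module.finrank_fintype_fun_eq_card] at this
    omega
  exact LinearMap.ker_eq_bot.mp (Submodule.finrank_eq_zero.mp hker)

theorem posDef_transpose_mul_self_of_rank_eq_card [Fintype m] {A : Matrix m n ℝ}
    (hA : A.rank = Fintype.card n) : (Aᵀ * A).PosDef := by
  simpa using PosDef.conjTranspose_mul_self A (mulVec_injective_of_rank_eq_card_s19 hA)

theorem det_transpose_mul_diagonal_const_mul_pos [Fintype m] [DecidableEq m] [DecidableEq n]
    {A : Matrix m n ℝ} (hA : A.rank = Fintype.card n) {c : ℝ} (hc : 0 < c) :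
    0 < (Aᵀ * diagonal (fun _ : m => c) * A).det := by
  rw [← smul_one_eq_diagonal, Matrix.mul_smul, Matrix.mul_one, Matrix.smul_mul, det_smul]
  exact mul_pos (pow_pos hc _) (posDef_transpose_mul_self_of_rank_eq_card hA).det_pos

theorem rank_mul_diagonal_mul_le [Field K] [Fintype m] [DecidableEq m] [DecidableEq K]
    (A : Matrix l m K) (w : m → K) (B : Matrix m n K) :
    (A * diagonal w * B).rank ≤ Fintype.card {i // w i ≠ 0} :=
  rank_diagonal w ▸ (rank_mul_le_left _ _).trans (rank_mul_le_right _ _)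

end Matrix

theorem const_inv_card_mem_stdSimplex {𝕜 ι : Type*} [Field 𝕜] [LinearOrder 𝕜]
    [IsStrictOrderedRing 𝕜] [Fintype ι] [Nonempty ι] :
    (fun _ => (Fintype.card ι : 𝕜)⁻¹) ∈ stdSimplex 𝕜 ι :=
  ⟨fun _ => by positivity, by simp⟩

theorem Fintype.card_ne_zero_eq_card_filter_pos {ι α : Type*} [Fintype ι] [LinearOrder α]
    [Zero α] {w : ι → α} (hw : ∀ i, 0 ≤ w i) :
    Fintype.card {i // w i ≠ 0} = (Finset.univ.filter fun i => 0 < w i).card := by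
  rw [Fintype.card_subtype]
  congr 1
  exact Finset.filter_congr fun i _ => ne_comm.trans (LE.le.lt_iff_ne (hw i)).symm

theorem stmt_19_general (M N : ℕ)
    (V : Matrix (Fin M) (Fin N) ℝ) (hV : V.rank = N)
    (G : (Fin M → ℝ) → Matrix (Fin N) (Fin N) ℝ)
    (hG : ∀ w, G w = Vᵀ * diagonal w * V)
    (w₀ : Fin M → ℝ)
    (hmem : w₀ ∈ {w : Fin M → ℝ | (∀ i, 0 ≤ w i) ∧ ∑ i, w i = 1})
    (hmax : IsMaxOn (fun w => (G w).det)
      {w : Fin M → ℝ | (∀ i, 0 ≤ w i) ∧ ∑ i, w i = 1} w₀) :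
    0 < (G w₀).det ∧
      N ≤ (Finset.univ.filter fun i => 0 < w₀ i).card := by
  have hV' : V.rank = Fintype.card (Fin N) := hV.trans (Fintype.card_fin N).symm
  have : Nonempty (Fin M) :=
    Finset.univ_nonempty_iff.mp (Finset.nonempty_of_sum_ne_zero (hmem.2 ▸ one_ne_zero))
  have hdet : 0 < (G w₀).det :=
    calc 0 < (G fun _ => (Fintype.card (Fin M) : ℝ)⁻¹).det := by
          rw [hG]
          exact det_transpose_mul_diagonal_const_mul_pos hV'
            (inv_pos.mpr (Nat.cast_pos.mpr Fintype.card_pos))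
      _ ≤ (G w₀).det := hmax const_inv_card_mem_stdSimplex
  refine ⟨hdet, ?_⟩
  calc N = (G w₀).rank := by rw [rank_of_det_ne_zero hdet.ne', Fintype.card_fin]
    _ ≤ Fintype.card {i // w₀ i ≠ 0} := hG w₀ ▸ rank_mul_diagonal_mul_le _ _ _
    _ = _ := Fintype.card_ne_zero_eq_card_filter_pos hmem.1

theorem stmt_19 (M N : ℕ) (hN : 0 < N) (hMN : N ≤ M)
    (V : Matrix (Fin M) (Fin N) ℝ) (hV : V.rank = N)
    (G : (Fin M → ℝ) → Matrix (Fin N) (Fin N) ℝ)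
    (hG : ∀ w, G w = Vᵀ * diagonal w * V)
    (w₀ : Fin M → ℝ)
    (hmem : w₀ ∈ {w : Fin M → ℝ | (∀ i, 0 ≤ w i) ∧ ∑ i, w i = 1})
    (hmax : IsMaxOn (fun w => (G w).det)
      {w : Fin M → ℝ | (∀ i, 0 ≤ w i) ∧ ∑ i, w i = 1} w₀) :
    0 < (G w₀).det ∧
      N ≤ (Finset.univ.filter fun i => 0 < w₀ i).card :=
  stmt_19_general M N V hV G hG w₀ hmem hmax
end
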